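/- arXiv:2005.06015 — 2 statements merged into one kernel-verified Lean document; each statement's English description precedes it below -/
import Mathlib

section
/- With A_n as above, E[A_n^2 | F_n] ≤ (N - n + 1)^2 almost surely for every n ∈ {0,...,N}; in particular A_n is square integrable. -/
/-!
Backward induction on `n` shows simultaneously that `E[A_n | F_n] = E[D_n | F_n]` and
`E[D_n | F_n] ≤ N - n + 1`. With `α = E[ΔS_{n+1} A_{n+1} | F_n]` and
`δ = E[ΔS_{n+1}² D_{n+1} | F_n]`, the induction hypothesis and the tower property give
`E[ΔS_{n+1} D_{n+1} | F_n] = α`, so both `E[A_n | F_n]` and `E[D_n | F_n]` equal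
`w_n + E[D_{n+1} | F_n] - α² / δ`: the choice `β_{n+1} = α / δ` minimises the conditional quadratic
`b ↦ E[(1 - b ΔS_{n+1})² D_{n+1} | F_n]`. Finally Cauchy–Schwarz gives
`A_n² ≤ (N - n + 1) D_n` pointwise.
-/

open MeasureTheory Finset

/-- `A_n = ∑_{i=n}^N ω_i ∏_{j=n+1}^i (1 - β_j ΔS_j)`. -/
def Aproc {Ω : Type*} (N : ℕ) (w β ΔS : ℕ → Ω → ℝ) (n : ℕ) (x : Ω) : ℝ :=
  ∑ i ∈ Finset.Icc n N, w i x * ∏ j ∈ Finset.Icc (n + 1) i, (1 - β j x * ΔS j x)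

/-- `D_n = ∑_{i=n}^N ω_i ∏_{j=n+1}^i (1 - β_j ΔS_j)²`. -/
def Dproc {Ω : Type*} (N : ℕ) (w β ΔS : ℕ → Ω → ℝ) (n : ℕ) (x : Ω) : ℝ :=
  ∑ i ∈ Finset.Icc n N, w i x * ∏ j ∈ Finset.Icc (n + 1) i, (1 - β j x * ΔS j x) ^ 2

lemma sum_Icc_mul_prod_Icc_eq_add_mul {R : Type*} [CommSemiring R] {n N : ℕ} (h : n < N)
    (w f : ℕ → R) :
    ∑ i ∈ Icc n N, w i * ∏ j ∈ Icc (n + 1) i, f j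
      = w n + f (n + 1) * ∑ i ∈ Icc (n + 1) N, w i * ∏ j ∈ Icc (n + 1 + 1) i, f j := by
  rw [← insert_Icc_add_one_left_eq_Icc h.le, sum_insert (by simp), Icc_eq_empty (by omega),
    prod_empty, mul_one, mul_sum]
  congr 1
  refine sum_congr rfl fun i hi => ?_
  rw [← insert_Icc_add_one_left_eq_Icc (mem_Icc.1 hi).1, prod_insert (by simp)]
  ring

lemma sq_sum_mul_le_card_mul_sum_mul_sq {ι R : Type*} [CommRing R] [LinearOrder R]
    [IsStrictOrderedRing R] (s : Finset ι) {w : ι → R} (hw : ∀ i ∈ s, w i ∈ Set.Icc 0 1)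
    (p : ι → R) :
    (∑ i ∈ s, w i * p i) ^ 2 ≤ #s * ∑ i ∈ s, w i * p i ^ 2 := by
  calc (∑ i ∈ s, w i * p i) ^ 2 ≤ (∑ i ∈ s, w i) * ∑ i ∈ s, w i * p i ^ 2 :=
        sum_sq_le_sum_mul_sum_of_sq_le_mul s (fun i hi => (hw i hi).1)
          (fun i hi => mul_nonneg (hw i hi).1 (sq_nonneg _)) fun i _ => le_of_eq (by ring)
    _ ≤ #s * ∑ i ∈ s, w i * p i ^ 2 := by
        gcongr
        · exact sum_nonneg fun i hi => mul_nonneg (hw i hi).1 (sq_nonneg _)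
        · exact (sum_le_sum fun i hi => (hw i hi).2).trans_eq (by simp)

section Recursion

variable {Ω : Type*} {N n : ℕ} {w β ΔS : ℕ → Ω → ℝ}

lemma Aproc_eq_add_mul_Aproc_succ (h : n < N) :
    Aproc N w β ΔS n = w n + (1 - β (n + 1) * ΔS (n + 1)) * Aproc N w β ΔS (n + 1) :=
  funext fun _ => sum_Icc_mul_prod_Icc_eq_add_mul h _ _

lemma Dproc_eq_add_mul_Dproc_succ (h : n < N) :
    Dproc N w β ΔS n = w n + (1 - β (n + 1) * ΔS (n + 1)) ^ 2 * Dproc N w β ΔS (n + 1) :=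
  funext fun _ => sum_Icc_mul_prod_Icc_eq_add_mul h _ _

lemma Dproc_self : Dproc N w β ΔS N = w N := by
  ext x
  simp [Dproc]

lemma Aproc_self_eq_Dproc_self : Aproc N w β ΔS N = Dproc N w β ΔS N := by
  ext x
  simp [Aproc, Dproc]

lemma Dproc_nonneg (hw : ∀ i x, 0 ≤ w i x) : 0 ≤ Dproc N w β ΔS n :=
  fun x => sum_nonneg fun i _ => mul_nonneg (hw i x) (prod_nonneg fun _ _ => sq_nonneg _)

lemma sq_Aproc_le (hn : n ≤ N) (hw : ∀ i x, w i x ∈ Set.Icc (0 : ℝ) 1) (x : Ω) :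
    Aproc N w β ΔS n x ^ 2 ≤ ((N : ℝ) - n + 1) * Dproc N w β ΔS n x := by
  have hcard : ((#(Icc n N) : ℕ) : ℝ) = (N : ℝ) - n + 1 := by
    rw [Nat.card_Icc, Nat.cast_sub (by omega)]
    push_cast
    ring
  rw [← hcard, Aproc, Dproc]
  simp_rw [prod_pow]
  exact sq_sum_mul_le_card_mul_sum_mul_sq _ (fun i _ => hw i x) _

end Recursion

-- Also true for `d = 0`, where both sides vanish because `a / 0 = 0`.
lemma div_sq_mul_self (a d : ℝ) : (a / d) ^ 2 * d = a / d * a := by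
  rcases eq_or_ne d 0 with rfl | hd
  · simp
  · field_simp

lemma div_mul_self_nonneg {a d : ℝ} (hd : 0 ≤ d) : 0 ≤ a / d * a := by
  rw [div_mul_eq_mul_div]
  exact div_nonneg (mul_self_nonneg a) hd

section CondExp

variable {Ω : Type*} {m m' m0 : MeasurableSpace Ω} {μ : Measure Ω} {f g A D S b : Ω → ℝ}

lemma MeasureTheory.Integrable.mul_of_sq_mul (hg : Integrable g μ)
    (hf : AEStronglyMeasurable f μ) (hg0 : 0 ≤ g) (hfg : Integrable (f ^ 2 * g) μ) :
    Integrable (f * g) μ := by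
  refine ((hfg.add hg).div_const 2).mono' (hf.mul hg.aestronglyMeasurable) (ae_of_all _ fun x => ?_)
  have hgx : 0 ≤ g x := hg0 x
  have hsq := mul_nonneg (sq_nonneg (|f x| - 1)) hgx
  rw [sub_sq, sq_abs] at hsq
  simp only [Pi.mul_apply, Pi.add_apply, Pi.pow_apply, Real.norm_eq_abs, abs_mul,
    abs_of_nonneg hgx]
  nlinarith

lemma condExp_congr_of_condExp_congr [IsFiniteMeasure μ] (hm : m ≤ m') (hm' : m' ≤ m0)
    (h : μ[f | m'] =ᵐ[μ] μ[g | m']) : μ[f | m] =ᵐ[μ] μ[g | m] :=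
  (condExp_condExp_of_le hm hm').symm.trans
    ((condExp_congr_ae h).trans (condExp_condExp_of_le hm hm'))

lemma condExp_le_const_of_condExp_le_const [IsFiniteMeasure μ] (hm : m ≤ m') (hm' : m' ≤ m0)
    {c : ℝ} (h : ∀ᵐ x ∂μ, μ[f | m'] x ≤ c) : ∀ᵐ x ∂μ, μ[f | m] x ≤ c := by
  have hmono := condExp_mono (m := m) integrable_condExp (integrable_const c) h
  rw [condExp_const (hm.trans hm')] at hmono
  filter_upwards [hmono, condExp_condExp_of_le (f := f) hm hm'] with x hx htower
  rwa [← htower]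

lemma condExp_mul_congr_of_condExp_congr [IsFiniteMeasure μ] (hm : m ≤ m') (hm' : m' ≤ m0)
    (hS : StronglyMeasurable[m'] S) (hA : Integrable A μ) (hD : Integrable D μ)
    (hSA : Integrable (S * A) μ) (hSD : Integrable (S * D) μ) (h : μ[A | m'] =ᵐ[μ] μ[D | m']) :
    μ[S * A | m] =ᵐ[μ] μ[S * D | m] := by
  refine condExp_congr_of_condExp_congr hm hm' ?_
  calc μ[S * A | m'] =ᵐ[μ] S * μ[A | m'] := condExp_mul_of_stronglyMeasurable_left hS hSA hA
    _ =ᵐ[μ] S * μ[D | m'] := h.mul_left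
    _ =ᵐ[μ] μ[S * D | m'] := (condExp_mul_of_stronglyMeasurable_left hS hSD hD).symm

lemma condExp_one_sub_mul_mul (hb : AEStronglyMeasurable[m] b μ) (hA : Integrable A μ)
    (hSA : Integrable (S * A) μ) (hbSA : Integrable ((1 - b * S) * A) μ) :
    μ[(1 - b * S) * A | m] =ᵐ[μ] μ[A | m] - b * μ[S * A | m] := by
  have hexp : (1 - b * S) * A = A - b * (S * A) := by ring
  have hbSA' : Integrable (b * (S * A)) μ := by
    simpa only [hexp, sub_sub_cancel] using hA.sub hbSA
  rw [hexp]
  exact (condExp_sub hA hbSA' m).trans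
    (.sub .rfl (condExp_mul_of_aestronglyMeasurable_left hb hbSA' hSA))

lemma condExp_one_sub_mul_sq_mul (hm : m ≤ m0) (hb : AEStronglyMeasurable[m] b μ)
    (hS : AEStronglyMeasurable S μ) (hD0 : 0 ≤ D) (hD : Integrable D μ)
    (hSD : Integrable (S ^ 2 * D) μ) (hbSD : Integrable ((1 - b * S) ^ 2 * D) μ) :
    μ[(1 - b * S) ^ 2 * D | m]
      =ᵐ[μ] μ[D | m] - 2 * b * μ[S * D | m] + b ^ 2 * μ[S ^ 2 * D | m] := by
  have hSD' : Integrable (S * D) μ := hD.mul_of_sq_mul hS hD0 hSD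
  have hbSD' : Integrable ((1 - b * S) * D) μ :=
    hD.mul_of_sq_mul (aestronglyMeasurable_const.sub ((hb.mono hm).mul hS)) hD0 hbSD
  have hX : Integrable (b * (S * D)) μ := by
    simpa only [show D - (1 - b * S) * D = b * (S * D) by ring] using hD.sub hbSD'
  have hY : Integrable (b ^ 2 * (S ^ 2 * D)) μ := by
    simpa only [show (1 - b * S) ^ 2 * D - D + (b * (S * D) + b * (S * D))
      = b ^ 2 * (S ^ 2 * D) by ring] using (hbSD.sub hD).add (hX.add hX)
  have hcX := condExp_mul_of_aestronglyMeasurable_left hb hX hSD'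
  have hcY := condExp_mul_of_aestronglyMeasurable_left (hb.pow 2) hY hSD
  rw [show (1 - b * S) ^ 2 * D = D - b * (S * D) - b * (S * D) + b ^ 2 * (S ^ 2 * D) by ring]
  refine ((condExp_add ((hD.sub hX).sub hX) hY m).trans
    (.add ((condExp_sub (hD.sub hX) hX m).trans (.sub (condExp_sub hD hX m) .rfl)) .rfl)).trans ?_
  filter_upwards [hcX, hcY] with x hx hy
  simp only [Pi.add_apply, Pi.sub_apply, Pi.mul_apply, Pi.pow_apply, Pi.ofNat_apply, hx, hy]
  ring

lemma condExp_stronglyMeasurable_add [IsFiniteMeasure μ] (hm : m ≤ m0)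
    (hf : StronglyMeasurable[m] f) (hfi : Integrable f μ) (hg : Integrable g μ) :
    μ[f + g | m] =ᵐ[μ] f + μ[g | m] := by
  simpa only [condExp_of_stronglyMeasurable hm hf hfi] using condExp_add hfi hg m

lemma condExp_backward_step [IsFiniteMeasure μ] (hm : m ≤ m') (hm' : m' ≤ m0) {w : Ω → ℝ}
    (hw : StronglyMeasurable[m] w) (hwi : Integrable w μ) (hS : StronglyMeasurable[m'] S)
    (hD0 : 0 ≤ D) (hA : Integrable A μ) (hD : Integrable D μ) (hSA : Integrable (S * A) μ)
    (hSD : Integrable (S ^ 2 * D) μ) (hAw : Integrable (w + (1 - b * S) * A) μ)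
    (hDw : Integrable (w + (1 - b * S) ^ 2 * D) μ) (hAD : μ[A | m'] =ᵐ[μ] μ[D | m'])
    (hb : b =ᵐ[μ] fun x => μ[S * A | m] x / μ[S ^ 2 * D | m] x) :
    μ[w + (1 - b * S) * A | m] =ᵐ[μ] μ[w + (1 - b * S) ^ 2 * D | m] ∧
      μ[w + (1 - b * S) ^ 2 * D | m] ≤ᵐ[μ] w + μ[D | m] := by
  have hm0 := hm.trans hm'
  have hbm : AEStronglyMeasurable[m] b μ :=
    ⟨_, (stronglyMeasurable_condExp.measurable.div
      stronglyMeasurable_condExp.measurable).stronglyMeasurable, hb⟩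
  have hSm : AEStronglyMeasurable S μ := (hS.mono hm').aestronglyMeasurable
  have hbSA : Integrable ((1 - b * S) * A) μ := by simpa using hAw.sub hwi
  have hbSD : Integrable ((1 - b * S) ^ 2 * D) μ := by simpa using hDw.sub hwi
  have hSD' : Integrable (S * D) μ := hD.mul_of_sq_mul hSm hD0 hSD
  have hcA := condExp_one_sub_mul_mul hbm hA hSA hbSA
  have hcD := condExp_one_sub_mul_sq_mul hm0 hbm hSm hD0 hD hSD hbSD
  have htower := condExp_congr_of_condExp_congr hm hm' hAD
  have htowerS := condExp_mul_congr_of_condExp_congr hm hm' hS hA hD hSA hSD' hAD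
  have hδ : 0 ≤ᵐ[μ] μ[S ^ 2 * D | m] :=
    condExp_nonneg (ae_of_all _ fun x => mul_nonneg (sq_nonneg _) (hD0 x))
  have hAval : μ[w + (1 - b * S) * A | m] =ᵐ[μ] w + μ[D | m] - b * μ[S * A | m] := by
    filter_upwards [condExp_stronglyMeasurable_add hm0 hw hwi hbSA, hcA, htower] with x h1 h2 h3
    simp only [Pi.add_apply, Pi.sub_apply, Pi.mul_apply] at h1 h2 ⊢
    rw [h1, h2, h3]
    ring
  have hDval : μ[w + (1 - b * S) ^ 2 * D | m] =ᵐ[μ] w + μ[D | m] - b * μ[S * A | m] := by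
    filter_upwards [condExp_stronglyMeasurable_add hm0 hw hwi hbSD, hcD, htowerS, hb]
      with x h1 h2 h3 h4
    simp only [Pi.add_apply, Pi.sub_apply, Pi.mul_apply, Pi.pow_apply, Pi.ofNat_apply] at h1 h2 ⊢
    rw [h1, h2, ← h3, h4, div_sq_mul_self]
    ring
  refine ⟨hAval.trans hDval.symm, ?_⟩
  filter_upwards [hDval, hb, hδ] with x h1 h2 h3
  have := div_mul_self_nonneg (a := μ[S * A | m] x) h3
  simp only [Pi.add_apply, Pi.sub_apply, Pi.mul_apply] at h1 ⊢
  rw [h1, h2]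
  linarith

end CondExp

theorem condExp_Aproc_eq_condExp_Dproc_and_le {Ω : Type*} {m0 : MeasurableSpace Ω}
    (μ : Measure Ω) [IsFiniteMeasure μ] (N : ℕ) (ℱ : Filtration ℕ m0) (ΔS w β : ℕ → Ω → ℝ)
    (hw : ∀ n x, w n x ∈ Set.Icc (0 : ℝ) 1) (hwa : ∀ n, StronglyMeasurable[ℱ n] (w n))
    (hSa : ∀ n, StronglyMeasurable[ℱ n] (ΔS n))
    (hβ : ∀ n < N, β (n + 1) =ᵐ[μ] fun x =>
      μ[ΔS (n + 1) * Aproc N w β ΔS (n + 1) | ℱ n] x /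
        μ[ΔS (n + 1) ^ 2 * Dproc N w β ΔS (n + 1) | ℱ n] x)
    (hAint : ∀ n, Integrable (Aproc N w β ΔS n) μ) (hDint : ∀ n, Integrable (Dproc N w β ΔS n) μ)
    (hSAint : ∀ n, Integrable (ΔS n * Aproc N w β ΔS n) μ)
    (hSDint : ∀ n, Integrable (ΔS n ^ 2 * Dproc N w β ΔS n) μ) :
    ∀ n ≤ N, μ[Aproc N w β ΔS n | ℱ n] =ᵐ[μ] μ[Dproc N w β ΔS n | ℱ n] ∧
      ∀ᵐ x ∂μ, μ[Dproc N w β ΔS n | ℱ n] x ≤ (N : ℝ) - n + 1 := by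
  have hwi : ∀ n, Integrable (w n) μ := fun n =>
    .of_bound ((hwa n).mono (ℱ.le n)).aestronglyMeasurable 1 (ae_of_all _ fun x => by
      rw [Real.norm_eq_abs, abs_le]
      exact ⟨by linarith [(hw n x).1], (hw n x).2⟩)
  intro n hn
  induction hn using Nat.decreasingInduction with
  | self =>
    rw [Aproc_self_eq_Dproc_self, Dproc_self,
      condExp_of_stronglyMeasurable (ℱ.le N) (hwa N) (hwi N)]
    exact ⟨.rfl, ae_of_all _ fun x => by simpa using (hw N x).2⟩
  | of_succ n hn ih =>
    have hAn := hAint n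
    have hDn := hDint n
    rw [Aproc_eq_add_mul_Aproc_succ hn] at hAn ⊢
    rw [Dproc_eq_add_mul_Dproc_succ hn] at hDn ⊢
    obtain ⟨hAD, hle⟩ := condExp_backward_step (ℱ.mono n.le_succ) (ℱ.le (n + 1)) (hwa n) (hwi n)
      (hSa (n + 1)) (Dproc_nonneg fun i x => (hw i x).1) (hAint _) (hDint _) (hSAint _)
      (hSDint _) hAn hDn ih.1 (hβ n hn)
    refine ⟨hAD, ?_⟩
    filter_upwards [hle, condExp_le_const_of_condExp_le_const (ℱ.mono n.le_succ) (ℱ.le _) ih.2]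
      with x h1 h2
    simp only [Pi.add_apply, Nat.cast_add, Nat.cast_one] at h1 h2 ⊢
    linarith [(hw n x).2]

theorem stmt_4_general {Ω : Type*} {m0 : MeasurableSpace Ω} (μ : Measure Ω) [IsProbabilityMeasure μ]
    (N : ℕ) (ℱ : Filtration ℕ m0) (ΔS w : ℕ → Ω → ℝ) (αp δp β : ℕ → Ω → ℝ)
    (hw : ∀ n x, w n x ∈ Set.Icc (0 : ℝ) 1)
    (hwa : ∀ n, StronglyMeasurable[ℱ n] (w n))
    (hSa : ∀ n, StronglyMeasurable[ℱ n] (ΔS n))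
    (hβ : ∀ n x, β n x = αp n x / δp n x)
    (hα : ∀ n ∈ Finset.Icc 1 N,
      αp n =ᵐ[μ] μ[fun x => ΔS n x * Aproc N w β ΔS n x | ℱ (n - 1)])
    (hδ : ∀ n ∈ Finset.Icc 1 N,
      δp n =ᵐ[μ] μ[fun x => ΔS n x ^ 2 * Dproc N w β ΔS n x | ℱ (n - 1)])
    (hAint : ∀ n, Integrable (Aproc N w β ΔS n) μ)
    (hDint : ∀ n, Integrable (Dproc N w β ΔS n) μ)
    (hSAint : ∀ n, Integrable (fun x => ΔS n x * Aproc N w β ΔS n x) μ)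
    (hSDint : ∀ n, Integrable (fun x => ΔS n x ^ 2 * Dproc N w β ΔS n x) μ)
    (hA2int : ∀ n, Integrable (fun x => Aproc N w β ΔS n x ^ 2) μ) :
    ∀ n ≤ N,
      (∀ᵐ x ∂μ, (μ[fun y => Aproc N w β ΔS n y ^ 2 | ℱ n]) x ≤ ((N : ℝ) - n + 1) ^ 2) ∧
      MemLp (Aproc N w β ΔS n) 2 μ := by
  have hβα : ∀ n < N, β (n + 1) =ᵐ[μ] fun x =>
      μ[ΔS (n + 1) * Aproc N w β ΔS (n + 1) | ℱ n] x /
        μ[ΔS (n + 1) ^ 2 * Dproc N w β ΔS (n + 1) | ℱ n] x := fun n hn => by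
    have hn1 : n + 1 ∈ Icc 1 N := mem_Icc.2 ⟨n.succ_pos, hn⟩
    filter_upwards [hα _ hn1, hδ _ hn1] with x hαx hδx
    rw [hβ, hαx, hδx, Nat.add_sub_cancel]
    rfl
  intro n hn
  have hDle := (condExp_Aproc_eq_condExp_Dproc_and_le μ N ℱ ΔS w β hw hwa hSa hβα hAint hDint
    hSAint hSDint n hn).2
  have hc : (0 : ℝ) ≤ (N : ℝ) - n + 1 := by
    have : (n : ℝ) ≤ N := by exact_mod_cast hn
    linarith
  refine ⟨?_, (memLp_two_iff_integrable_sq (hAint n).aestronglyMeasurable).2 (hA2int n)⟩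
  have hCS := condExp_mono (m := ℱ n) (hA2int n) ((hDint n).const_mul ((N : ℝ) - n + 1))
    (ae_of_all _ (sq_Aproc_le hn hw))
  filter_upwards [hCS, condExp_smul ((N : ℝ) - n + 1) (Dproc N w β ΔS n) (ℱ n), hDle]
    with x h1 h2 h3
  calc μ[fun y => Aproc N w β ΔS n y ^ 2 | ℱ n] x
      ≤ ((N : ℝ) - n + 1) * μ[Dproc N w β ΔS n | ℱ n] x := h1.trans_eq h2
    _ ≤ ((N : ℝ) - n + 1) ^ 2 := by rw [sq]; exact mul_le_mul_of_nonneg_left h3 hc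

/-- Lemma 1(1), first part: `E[A_n² | F_n] ≤ (N - n + 1)²` a.s. for every `n ∈ {0,…,N}`;
in particular `A_n` is square integrable. -/
theorem stmt_4 {Ω : Type*} {m0 : MeasurableSpace Ω} (μ : Measure Ω) [IsProbabilityMeasure μ]
    (N : ℕ) (ℱ : Filtration ℕ m0) (ΔS w : ℕ → Ω → ℝ) (αp δp β : ℕ → Ω → ℝ)
    (hw : ∀ n x, w n x ∈ Set.Icc (0 : ℝ) 1)
    (hwa : ∀ n, StronglyMeasurable[ℱ n] (w n))
    (hSa : ∀ n, StronglyMeasurable[ℱ n] (ΔS n))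
    (hSloc : ∀ n, Integrable (fun x => ΔS n x ^ 2) μ)
    (hβ : ∀ n x, β n x = αp n x / δp n x)
    (hβ0 : ∀ x, β 0 x = 0)
    (hα : ∀ n ∈ Finset.Icc 1 N,
      αp n =ᵐ[μ] μ[fun x => ΔS n x * Aproc N w β ΔS n x | ℱ (n - 1)])
    (hδ : ∀ n ∈ Finset.Icc 1 N,
      δp n =ᵐ[μ] μ[fun x => ΔS n x ^ 2 * Dproc N w β ΔS n x | ℱ (n - 1)])
    (hAint : ∀ n, Integrable (Aproc N w β ΔS n) μ)
    (hDint : ∀ n, Integrable (Dproc N w β ΔS n) μ)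
    (hSAint : ∀ n, Integrable (fun x => ΔS n x * Aproc N w β ΔS n x) μ)
    (hSDint : ∀ n, Integrable (fun x => ΔS n x ^ 2 * Dproc N w β ΔS n x) μ)
    (hA2int : ∀ n, Integrable (fun x => Aproc N w β ΔS n x ^ 2) μ) :
    ∀ n ≤ N,
      (∀ᵐ x ∂μ, (μ[fun y => Aproc N w β ΔS n y ^ 2 | ℱ n]) x ≤ ((N : ℝ) - n + 1) ^ 2) ∧
      MemLp (Aproc N w β ΔS n) 2 μ :=
  stmt_4_general μ N ℱ ΔS w αp δp β hw hwa hSa hβ hα hδ hAint hDint hSAint hSDint hA2int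
end

section
/- If the random horizon τ takes values in {0,...,N}, is independent of the price process S, and S is a square-integrable martingale, then the quadratic-pricing-optimal initial capital for the claim H_τ equals c* = ∑_{n=0}^{N} E[H_n] · P(τ = n), i.e., the minimizer over c of min_ξ E[(H_τ - c - G_τ(ξ))^2] is the expected claim value weighted by the horizon distribution. -/
open MeasureTheory ProbabilityTheory

/-- Gain process of a strategy `ψ`: `G_n(ψ) = ∑_{k=1}^n ψ_k ΔS_k` (so `G_0 = 0`). -/
def gain {Ω : Type*} (ΔS ψ : ℕ → Ω → ℝ) (n : ℕ) (x : Ω) : ℝ :=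
  ∑ k ∈ Finset.Icc 1 n, ψ k x * ΔS k x

/-!
Fix a strategy `ξ` and write `f_c = H_τ - c - G_τ(ξ)` for the hedging error. On `{τ = n}` it
equals `H_n - c - G_n(ξ)`, which is independent of `τ`, and the martingale transform `G_n(ξ)` has
mean zero; hence `E[f_c] = c* - c`, i.e. `f_{c*} = f_c - E[f_c]`, and
`E[f_{c*}²] = Var f_c ≤ E[f_c²]`. So every value attained at `c` is attained or beaten at `c*`
by the same strategy.

Nothing makes `ξ` integrable: `G_n(ξ)` is integrable only because `1_{τ = n} f_c` is and `τ` is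
independent of it, and integrability is then pushed back to earlier times through the
martingale transform.
-/

section CondExp

variable {Ω : Type*} {m m0 : MeasurableSpace Ω} {μ : Measure Ω} [IsFiniteMeasure μ]
  {A B D : Ω → ℝ}

theorem condExp_add_mul_eq_of_condExp_eq_zero (hm : m ≤ m0) (hA : StronglyMeasurable[m] A)
    (hAi : Integrable A μ) (hB : StronglyMeasurable[m] B) (hD : Integrable D μ)
    (hD0 : μ[D | m] =ᵐ[μ] 0) (hBD : Integrable (B * D) μ) :
    μ[A + B * D | m] =ᵐ[μ] A := by
  filter_upwards [condExp_add hAi hBD m, condExp_mul_of_stronglyMeasurable_left hB hBD hD, hD0]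
    with x hsum hmul hzero
  simp [hsum, hmul, hzero, condExp_of_stronglyMeasurable hm hA hAi]

/-- On `{|B| ≤ M}` the function `A` is the conditional expectation of `A + B * D`, so the
`L¹` contraction of conditional expectation bounds its norm there by `‖A + B * D‖₁`. -/
theorem integrable_of_integrable_add_mul (hm : m ≤ m0) (hA : StronglyMeasurable[m] A)
    (hB : StronglyMeasurable[m] B) (hD : Integrable D μ) (hD0 : μ[D | m] =ᵐ[μ] 0)
    (h : Integrable (A + B * D) μ) : Integrable A μ := by
  set E : ℕ → Set Ω := fun M => {x | |B x| ≤ M}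
  have hE : ∀ M, MeasurableSet[m] (E M) := fun M =>
    (continuous_abs.measurable.comp hB.measurable) measurableSet_Iic
  have hEB : ∀ M, Integrable ((E M).indicator B * D) μ := fun M =>
    hD.bdd_mul ((hB.indicator (hE M)).mono hm).aestronglyMeasurable (c := M)
      (ae_of_all _ fun x => by
        by_cases hx : |B x| ≤ M <;> simp [E, hx])
  have hEA : ∀ M, Integrable ((E M).indicator A) μ := fun M => by
    have : (E M).indicator A = (E M).indicator (A + B * D) - (E M).indicator B * D := by
      ext x; by_cases hx : x ∈ E M <;> simp [hx]
    rw [this]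
    exact (h.indicator (hm _ (hE M))).sub (hEB M)
  have hbound : ∀ M, ∫⁻ x in E M, ‖A x‖ₑ ∂μ ≤ ∫⁻ x, ‖(A + B * D) x‖ₑ ∂μ := fun M => calc
    ∫⁻ x in E M, ‖A x‖ₑ ∂μ = eLpNorm ((E M).indicator A) 1 μ := by
      rw [eLpNorm_one_eq_lintegral_enorm, ← lintegral_indicator (hm _ (hE M))]
      simp_rw [enorm_indicator_eq_indicator_enorm]
    _ = eLpNorm (μ[(E M).indicator A + (E M).indicator B * D | m]) 1 μ :=
      (eLpNorm_congr_ae (condExp_add_mul_eq_of_condExp_eq_zero hm (hA.indicator (hE M))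
        (hEA M) (hB.indicator (hE M)) hD hD0 (hEB M))).symm
    _ ≤ eLpNorm ((E M).indicator A + (E M).indicator B * D) 1 μ :=
      eLpNorm_condExp_le_eLpNorm _ le_rfl
    _ ≤ ∫⁻ x, ‖(A + B * D) x‖ₑ ∂μ := by
      rw [eLpNorm_one_eq_lintegral_enorm]
      refine lintegral_mono fun x => ?_
      by_cases hx : x ∈ E M <;> simp [hx]
  have hunion : (⋃ M, E M) = Set.univ :=
    Set.eq_univ_of_forall fun x => Set.mem_iUnion.2 ⟨⌈|B x|⌉₊, Nat.le_ceil (|B x|)⟩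
  have hdir : Directed (· ⊆ ·) E := Monotone.directed_le fun M M' hMM' x (hx : |B x| ≤ M) =>
    show |B x| ≤ M' from hx.trans (by exact_mod_cast hMM')
  refine ⟨(hA.mono hm).aestronglyMeasurable, ?_⟩
  rw [hasFiniteIntegral_iff_enorm, ← setLIntegral_univ, ← hunion,
    setLIntegral_iUnion_of_directed _ hdir]
  exact lt_of_le_of_lt (iSup_le hbound) h.2

theorem integral_add_mul_eq_integral (hm : m ≤ m0) (hA : StronglyMeasurable[m] A)
    (hB : StronglyMeasurable[m] B) (hD : Integrable D μ) (hD0 : μ[D | m] =ᵐ[μ] 0)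
    (h : Integrable (A + B * D) μ) : ∫ x, (A + B * D) x ∂μ = ∫ x, A x ∂μ := by
  have hAi := integrable_of_integrable_add_mul hm hA hB hD hD0 h
  have hBD : Integrable (B * D) μ := by simpa using h.sub hAi
  rw [← integral_condExp hm, integral_congr_ae
    (condExp_add_mul_eq_of_condExp_eq_zero hm hA hAi hB hD hD0 hBD)]

end CondExp

section Gain

variable {Ω : Type*} {m0 : MeasurableSpace Ω} {μ : Measure Ω} [IsFiniteMeasure μ]
  {ℱ : Filtration ℕ m0} {ΔS ξ : ℕ → Ω → ℝ}

theorem gain_zero : gain ΔS ξ 0 = 0 := by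
  ext x; simp [gain]

theorem gain_succ (n : ℕ) : gain ΔS ξ (n + 1) = gain ΔS ξ n + ξ (n + 1) * ΔS (n + 1) := by
  ext x
  simp [gain, Finset.sum_Icc_succ_top (Nat.le_add_left 1 n)]

theorem stronglyMeasurable_gain (hS : ∀ n, StronglyMeasurable[ℱ n] (ΔS n))
    (hξ : ∀ n, StronglyMeasurable[ℱ (n - 1)] (ξ n)) (n : ℕ) :
    StronglyMeasurable[ℱ n] (gain ΔS ξ n) := by
  induction n with
  | zero => rw [gain_zero]; exact stronglyMeasurable_zero
  | succ n ih =>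
    rw [gain_succ]
    exact (ih.mono (ℱ.mono n.le_succ)).add
      (((hξ (n + 1)).mono (ℱ.mono (by omega))).mul (hS (n + 1)))

theorem integral_gain_eq_zero {N : ℕ} (hS : ∀ n, StronglyMeasurable[ℱ n] (ΔS n))
    (hSi : ∀ n, Integrable (ΔS n) μ) (hmart : ∀ n ∈ Finset.Icc 1 N, μ[ΔS n | ℱ (n - 1)] =ᵐ[μ] 0)
    (hξ : ∀ n, StronglyMeasurable[ℱ (n - 1)] (ξ n)) {n : ℕ} (hn : n ≤ N)
    (hint : Integrable (gain ΔS ξ n) μ) : ∫ x, gain ΔS ξ n x ∂μ = 0 := by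
  induction n with
  | zero => simp [gain_zero]
  | succ n ih =>
    have hA := stronglyMeasurable_gain hS hξ n
    have hB : StronglyMeasurable[ℱ n] (ξ (n + 1)) := by simpa using hξ (n + 1)
    have hD0 : μ[ΔS (n + 1) | ℱ n] =ᵐ[μ] 0 := by
      simpa using hmart (n + 1) (Finset.mem_Icc.2 ⟨by omega, hn⟩)
    rw [gain_succ] at hint ⊢
    rw [integral_add_mul_eq_integral (ℱ.le n) hA hB (hSi _) hD0 hint,
      ih (by omega) (integrable_of_integrable_add_mul (ℱ.le n) hA hB (hSi _) hD0 hint)]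

end Gain

section RandomIndex

variable {Ω : Type*} {m0 : MeasurableSpace Ω} {μ : Measure Ω} {τ : Ω → ℕ} {N : ℕ}

theorem measurable_comp_index {W : ℕ → Ω → ℝ} (hτ : Measurable τ) (hW : ∀ n, Measurable (W n)) :
    Measurable fun x => W (τ x) x :=
  (measurable_from_prod_countable_right (f := fun p : ℕ × Ω => W p.1 p.2) hW).comp
    (hτ.prodMk measurable_id)

theorem comp_index_eq_sum_indicator {β : Type*} [AddCommMonoid β] (hτN : ∀ x, τ x ≤ N)
    (W : ℕ → Ω → β) :
    (fun x => W (τ x) x) = ∑ n ∈ Finset.range (N + 1), {x | τ x = n}.indicator (W n) := by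
  ext x
  rw [Finset.sum_apply,
    Finset.sum_eq_single_of_mem (τ x) (by simpa using Nat.lt_succ_of_le (hτN x))]
  · simp
  · intro n _ hn
    simp [Ne.symm hn]

theorem memLp_comp_index {W : ℕ → Ω → ℝ} {p : ENNReal} (hτ : Measurable τ)
    (hτN : ∀ x, τ x ≤ N) (hW : ∀ n ≤ N, MemLp (W n) p μ) : MemLp (fun x => W (τ x) x) p μ := by
  rw [comp_index_eq_sum_indicator hτN]
  exact memLp_finsetSum' _ fun n hn =>
    (hW n (Nat.lt_succ_iff.1 (Finset.mem_range.1 hn))).indicator (hτ (measurableSet_singleton n))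

theorem integral_eq_sum_setIntegral_index_eq {f : Ω → ℝ} (hτ : Measurable τ) (hτN : ∀ x, τ x ≤ N)
    (hf : Integrable f μ) :
    ∫ x, f x ∂μ = ∑ n ∈ Finset.range (N + 1), ∫ x in {x | τ x = n}, f x ∂μ := by
  have hunion : (⋃ n ∈ Finset.range (N + 1), {x | τ x = n}) = Set.univ :=
    Set.eq_univ_of_forall fun x => Set.mem_biUnion (by simpa using Nat.lt_succ_of_le (hτN x)) rfl
  rw [← setIntegral_univ, ← hunion]
  exact integral_biUnion_finset _ (fun n _ => hτ (measurableSet_singleton n))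
    (fun a _ b _ hab => Set.disjoint_left.2 fun x ha hb => hab (ha.symm.trans hb))
    fun n _ => hf.integrableOn

theorem sum_measureReal_index_eq_one [IsProbabilityMeasure μ] (hτ : Measurable τ)
    (hτN : ∀ x, τ x ≤ N) : ∑ n ∈ Finset.range (N + 1), μ.real {x | τ x = n} = 1 := by
  simpa using (integral_eq_sum_setIntegral_index_eq hτ hτN (integrable_const (1 : ℝ) (μ := μ))).symm

end RandomIndex

theorem ProbabilityTheory.Indep.integrable_of_integrableOn {Ω : Type*}
    {m₁ m₂ m0 : MeasurableSpace Ω} {μ : Measure Ω} {s : Set Ω} {W : Ω → ℝ} (h : Indep m₁ m₂ μ)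
    (hm₁ : m₁ ≤ m0) (hm₂ : m₂ ≤ m0) (hs : MeasurableSet[m₁] s) (hμs : μ s ≠ 0)
    (hW : Measurable[m₂] W)
    (hWs : IntegrableOn W s μ) : Integrable W μ := by
  have hindep : IndepFun (s.indicator fun _ => (1 : ℝ)) W μ :=
    (indep_of_indep_of_le_right h hW.comap_le).indicator_indepFun 1 hs
  refine hindep.integrable_right_of_integrable_op (· * ·) 1 one_ne_zero
    (fun a b => by simp [enorm_mul]) ?_ ?_ (hW.mono hm₂ le_rfl).aestronglyMeasurable ?_
  · have : (fun x => s.indicator (fun _ => (1 : ℝ)) x * W x) = s.indicator W := by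
      ext x; by_cases hx : x ∈ s <;> simp [hx]
    rwa [this, integrable_indicator_iff (hm₁ _ hs)]
  · exact (aemeasurable_indicator_const_iff 1).2 (hm₁ _ hs).nullMeasurableSet
      |>.aestronglyMeasurable
  · rwa [Set.indicator_ae_eq_zero, Function.support_const one_ne_zero, Set.inter_univ]

section Hedging

variable {Ω : Type*} {m0 : MeasurableSpace Ω} {μ : Measure Ω} [IsProbabilityMeasure μ] {N : ℕ}
  {ℱ : Filtration ℕ m0} {ΔS H ξ : ℕ → Ω → ℝ} {τ : Ω → ℕ}

theorem stronglyMeasurable_sub_sub_gain (hS : ∀ n, StronglyMeasurable[ℱ n] (ΔS n))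
    (hH : ∀ n, StronglyMeasurable[ℱ n] (H n)) (hξ : ∀ n, StronglyMeasurable[ℱ (n - 1)] (ξ n))
    (b : ℝ) (n : ℕ) : StronglyMeasurable[ℱ n] fun x => H n x - b - gain ΔS ξ n x :=
  ((hH n).sub stronglyMeasurable_const).sub (stronglyMeasurable_gain hS hξ n)

theorem setIntegral_index_eq_sub_sub_gain (hS : ∀ n, StronglyMeasurable[ℱ n] (ΔS n))
    (hSi : ∀ n, Integrable (ΔS n) μ)
    (hmart : ∀ n ∈ Finset.Icc 1 N, μ[ΔS n | ℱ (n - 1)] =ᵐ[μ] 0)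
    (hH : ∀ n, StronglyMeasurable[ℱ n] (H n)) (hHi : ∀ n, Integrable (H n) μ)
    (hτ : Measurable τ) (hτindep : Indep (MeasurableSpace.comap τ ⊤) (ℱ N) μ)
    (hξ : ∀ n, StronglyMeasurable[ℱ (n - 1)] (ξ n)) (b : ℝ)
    (hf : Integrable (fun x => H (τ x) x - b - gain ΔS ξ (τ x) x) μ) {n : ℕ} (hn : n ≤ N) :
    ∫ x in {x | τ x = n}, (H (τ x) x - b - gain ΔS ξ (τ x) x) ∂μ =
      (∫ x, H n x ∂μ - b) * μ.real {x | τ x = n} := by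
  have hs : MeasurableSet[MeasurableSpace.comap τ ⊤] {x | τ x = n} := ⟨{n}, trivial, rfl⟩
  have hs0 : MeasurableSet {x | τ x = n} := hτ.comap_le _ hs
  rw [setIntegral_congr_fun hs0 fun x (hx : τ x = n) => by rw [hx]]
  by_cases h0 : μ {x | τ x = n} = 0
  · simp [Measure.restrict_eq_zero.2 h0, measureReal_def, h0]
  set W : Ω → ℝ := fun x => H n x - b - gain ΔS ξ n x
  have hWm : Measurable[ℱ N] W :=
    ((stronglyMeasurable_sub_sub_gain hS hH hξ b n).mono (ℱ.mono hn)).measurable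
  have hWi : Integrable W μ := hτindep.integrable_of_integrableOn hτ.comap_le (ℱ.le N) hs h0 hWm
    (hf.integrableOn.congr_fun (fun x (hx : τ x = n) => by simp only [W, hx]) hs0)
  have hGi : Integrable (gain ΔS ξ n) μ := by
    refine (((hHi n).sub (integrable_const b)).sub hWi).congr (ae_of_all _ fun x => ?_)
    simp [W]
  calc ∫ x in {x | τ x = n}, W x ∂μ = μ.real {x | τ x = n} * ∫ x, W x ∂μ :=
        (indep_of_indep_of_le_right hτindep hWm.comap_le).setIntegral_eq_mul (f := id)
          hτ.comap_le (hWm.mono (ℱ.le N) le_rfl).aemeasurable hs aestronglyMeasurable_id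
    _ = (∫ x, H n x ∂μ - b) * μ.real {x | τ x = n} := by
        simp only [W]
        rw [integral_sub (f := fun x => H n x - b) ((hHi n).sub (integrable_const b)) hGi,
          integral_sub (hHi n) (integrable_const b),
          integral_gain_eq_zero hS hSi hmart hξ hn hGi, integral_const]
        simp [mul_comm]

theorem integral_sub_sub_gain_comp_index (hS : ∀ n, StronglyMeasurable[ℱ n] (ΔS n))
    (hSi : ∀ n, Integrable (ΔS n) μ)
    (hmart : ∀ n ∈ Finset.Icc 1 N, μ[ΔS n | ℱ (n - 1)] =ᵐ[μ] 0)
    (hH : ∀ n, StronglyMeasurable[ℱ n] (H n)) (hHi : ∀ n, Integrable (H n) μ)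
    (hτ : Measurable τ) (hτN : ∀ x, τ x ≤ N)
    (hτindep : Indep (MeasurableSpace.comap τ ⊤) (ℱ N) μ)
    (hξ : ∀ n, StronglyMeasurable[ℱ (n - 1)] (ξ n)) (b : ℝ)
    (hf : Integrable (fun x => H (τ x) x - b - gain ΔS ξ (τ x) x) μ) :
    ∫ x, (H (τ x) x - b - gain ΔS ξ (τ x) x) ∂μ =
      ∑ n ∈ Finset.range (N + 1), (∫ x, H n x ∂μ) * μ.real {x | τ x = n} - b := by
  rw [integral_eq_sum_setIntegral_index_eq hτ hτN hf, Finset.sum_congr rfl fun n hn =>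
    setIntegral_index_eq_sub_sub_gain hS hSi hmart hH hHi hτ hτindep hξ b hf
      (Nat.lt_succ_iff.1 (Finset.mem_range.1 hn))]
  simp_rw [sub_mul]
  rw [Finset.sum_sub_distrib, ← Finset.mul_sum, sum_measureReal_index_eq_one hτ hτN, mul_one]

theorem integral_sq_sub_sub_gain_le_of_mean_capital (hS : ∀ n, StronglyMeasurable[ℱ n] (ΔS n))
    (hS2 : ∀ n, MemLp (ΔS n) 2 μ)
    (hmart : ∀ n ∈ Finset.Icc 1 N, μ[ΔS n | ℱ (n - 1)] =ᵐ[μ] 0)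
    (hH : ∀ n, StronglyMeasurable[ℱ n] (H n)) (hH2 : ∀ n, MemLp (H n) 2 μ)
    (hτ : Measurable τ) (hτN : ∀ x, τ x ≤ N)
    (hτindep : Indep (MeasurableSpace.comap τ ⊤) (ℱ N) μ)
    (hξ : ∀ n, StronglyMeasurable[ℱ (n - 1)] (ξ n)) (c : ℝ)
    (hint : Integrable (fun x => (H (τ x) x - c - gain ΔS ξ (τ x) x) ^ 2) μ) :
    let c' := ∑ n ∈ Finset.range (N + 1), (∫ x, H n x ∂μ) * μ.real {x | τ x = n}
    Integrable (fun x => (H (τ x) x - c' - gain ΔS ξ (τ x) x) ^ 2) μ ∧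
      ∫ x, (H (τ x) x - c' - gain ΔS ξ (τ x) x) ^ 2 ∂μ ≤
        ∫ x, (H (τ x) x - c - gain ΔS ξ (τ x) x) ^ 2 ∂μ := by
  intro c'
  set f := fun x => H (τ x) x - c - gain ΔS ξ (τ x) x
  have hfm : Measurable f := measurable_comp_index hτ fun n =>
    ((stronglyMeasurable_sub_sub_gain hS hH hξ c n).mono (ℱ.le n)).measurable
  have hf : MemLp f 2 μ := (memLp_two_iff_integrable_sq hfm.aestronglyMeasurable).2 hint
  have hmean : ∫ x, f x ∂μ = c' - c :=
    integral_sub_sub_gain_comp_index hS (fun n => (hS2 n).integrable one_le_two) hmart hH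
      (fun n => (hH2 n).integrable one_le_two) hτ hτN hτindep hξ c (hf.integrable one_le_two)
  have hshift : ∀ x, H (τ x) x - c' - gain ΔS ξ (τ x) x = f x - ∫ x, f x ∂μ := by
    intro x; rw [hmean]; simp only [f]; ring
  simp_rw [hshift]
  refine ⟨(hf.sub (memLp_const _)).integrable_sq, ?_⟩
  rw [← variance_eq_integral hfm.aemeasurable]
  exact variance_le_expectation_sq hfm.aestronglyMeasurable

end Hedging

/-- Quadratic pricing under an independent random horizon: if `τ` takes values in
`{0,…,N}`, is independent of `F_N`, and `S` is a square-integrable martingale, then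
`c* = ∑_{n=0}^N E[H_n] P(τ = n)` minimizes
`c ↦ inf_ξ E[(H_τ - c - G_τ(ξ))²]` over `c ∈ ℝ` (the infimum being over predictable
strategies `ξ`). -/
theorem stmt_19 {Ω : Type*} {m0 : MeasurableSpace Ω} (μ : Measure Ω) [IsProbabilityMeasure μ]
    (N : ℕ) (ℱ : Filtration ℕ m0) (ΔS H : ℕ → Ω → ℝ) (τ : Ω → ℕ)
    (hSa : ∀ n, StronglyMeasurable[ℱ n] (ΔS n))
    (hS2 : ∀ n, MemLp (ΔS n) 2 μ)
    (hmart : ∀ n ∈ Finset.Icc 1 N, μ[ΔS n | ℱ (n - 1)] =ᵐ[μ] 0)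
    (hHa : ∀ n, StronglyMeasurable[ℱ n] (H n))
    (hH2 : ∀ n, MemLp (H n) 2 μ)
    (hτmeas : Measurable τ)
    (hτN : ∀ x, τ x ≤ N)
    (hτindep : Indep (MeasurableSpace.comap τ ⊤) (ℱ N) μ)
    (V : ℝ → ℝ)
    (hV : ∀ c, V c = sInf { y : ℝ | ∃ ξ : ℕ → Ω → ℝ,
      (∀ i, StronglyMeasurable[ℱ (i - 1)] (ξ i)) ∧
      Integrable (fun x => (H (τ x) x - c - gain ΔS ξ (τ x) x) ^ 2) μ ∧
      y = ∫ x, (H (τ x) x - c - gain ΔS ξ (τ x) x) ^ 2 ∂μ }) :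
    ∀ c : ℝ,
      V (∑ n ∈ Finset.range (N + 1), (∫ x, H n x ∂μ) * (μ {x | τ x = n}).toReal) ≤ V c := by
  intro c
  rw [hV, hV]
  refine le_csInf ⟨_, fun _ _ => 0, fun _ => stronglyMeasurable_const, ?_, rfl⟩ ?_
  · simp only [gain, zero_mul, Finset.sum_const_zero, sub_zero]
    exact ((memLp_comp_index hτmeas hτN fun n _ => hH2 n).sub (memLp_const c)).integrable_sq
  rintro _ ⟨ξ, hξ, hint, rfl⟩
  obtain ⟨hint', hle⟩ := integral_sq_sub_sub_gain_le_of_mean_capital hSa hS2 hmart hHa hH2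
    hτmeas hτN hτindep hξ c hint
  refine csInf_le_of_le ⟨0, ?_⟩ ⟨ξ, hξ, hint', rfl⟩ hle
  rintro _ ⟨_, -, -, rfl⟩
  exact integral_nonneg fun x => sq_nonneg _
end
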